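/- arXiv:1709.00664 — 7 statements merged into one kernel-verified Lean document; each statement's English description precedes it below -/
import Mathlib

section
/- If Z is a Gamma-distributed random variable with shape parameter T (a positive integer) and scale 1, then its CDF F_Z satisfies (1 - e^{-a z})^T ≤ F_Z(z) ≤ (1 - e^{-z})^T for all z ≥ 0, where a = (T!)^{-1/T}. -/
/-!
Write `G` for the CDF of `Γ(n + 1, 1)`, so that `G' t = tⁿ e⁻ᵗ / n!`. Each bound says that a
difference `D` of `G` and `(1 - e^{-ct})^{n+1}` (with `c = 1`, resp. `c = a`) is nonnegative.
Such a `D` vanishes at `0` and at `∞`, and `D'` has the sign of an antitone function, so `D` first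
increases and then decreases, and hence stays nonnegative. For the upper bound that function is
`(n + 1)! ((1 - e⁻ᵗ) / t)ⁿ - 1`; for the lower bound, where `aⁿ⁺¹ (n + 1)! = 1` is used, it is
`n g(at) / (at) - (1 - a) / a` with `g u = log (u / (1 - e⁻ᵘ))`. Both are antitone because
`f u / u` is antitone for every nonnegative concave `f` on `(0, ∞)`, here `1 - e⁻ᵘ` and `g`;
concavity of `g` amounts to `u ≤ 2 sinh (u / 2)`.
-/

open MeasureTheory Real Filter Set Topology
open scoped Nat

theorem nonneg_of_hasDerivAt_of_sign_change {f f' k : ℝ → ℝ} (hf : ∀ x, HasDerivAt f (f' x) x)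
    (h0 : f 0 = 0) (hlim : Tendsto f atTop (𝓝 0)) (hk : AntitoneOn k (Ioi 0))
    (hsign : ∀ x, 0 < x → (f' x < 0 ↔ k x < 0)) {z : ℝ} (hz : 0 ≤ z) : 0 ≤ f z := by
  have hcont : Continuous f := continuous_iff_continuousAt.2 fun x => (hf x).continuousAt
  by_cases hneg : ∃ w ∈ Ioc 0 z, k w < 0
  · obtain ⟨w, ⟨hw0, hwz⟩, hkw⟩ := hneg
    have hanti : AntitoneOn f (Ici z) := by
      refine antitoneOn_of_hasDerivWithinAt_nonpos (convex_Ici z) hcont.continuousOn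
        (fun x _ => (hf x).hasDerivWithinAt) fun x hx => ?_
      rw [interior_Ici] at hx
      have hx0 : 0 < x := hw0.trans_le (hwz.trans hx.le)
      exact ((hsign x hx0).2 ((hk hw0 hx0 (hwz.trans hx.le)).trans_lt hkw)).le
    exact le_of_tendsto hlim (eventually_atTop.2 ⟨z, fun y hy => hanti self_mem_Ici hy hy⟩)
  · push Not at hneg
    have hmono : MonotoneOn f (Icc 0 z) := by
      refine monotoneOn_of_hasDerivWithinAt_nonneg (convex_Icc 0 z) hcont.continuousOn
        (fun x _ => (hf x).hasDerivWithinAt) fun x hx => ?_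
      rw [interior_Icc] at hx
      exact not_lt.1 fun h => (hneg x ⟨hx.1, hx.2.le⟩).not_gt ((hsign x hx.1).1 h)
    simpa [h0] using hmono (left_mem_Icc.2 hz) (right_mem_Icc.2 hz) hz

theorem ConcaveOn.antitoneOn_div_self {f : ℝ → ℝ} (hf : ConcaveOn ℝ (Ioi 0) f)
    (hf₀ : ∀ x, 0 < x → 0 ≤ f x) : AntitoneOn (fun x => f x / x) (Ioi 0) := by
  intro u (hu : 0 < u) v (hv : 0 < v) huv
  -- `f` need not extend to `0`: compare chords from `ε ∈ (0, u)` and let `ε → 0`.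
  have hchord : ∀ ε ∈ Ioo 0 u, (u - ε) * f v ≤ (v - ε) * f u := by
    rintro ε ⟨hε, hεu⟩
    have h := hf.slope_anti (x := ε) hε ⟨hu, hεu.ne'⟩ ⟨hv, (hεu.trans_le huv).ne'⟩ huv
    rw [slope_def_field, slope_def_field, div_le_div_iff₀ (by linarith) (by linarith)] at h
    nlinarith [mul_nonneg (hf₀ ε hε) (sub_nonneg.2 huv)]
  have hlim : Tendsto (fun ε => (v - ε) * f u - (u - ε) * f v) (𝓝[>] 0)
      (𝓝 (v * f u - u * f v)) := by
    have hc : Continuous fun ε : ℝ => (v - ε) * f u - (u - ε) * f v := by fun_prop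
    simpa using tendsto_nhdsWithin_of_tendsto_nhds (hc.tendsto 0)
  have h := ge_of_tendsto hlim (eventually_of_mem (Ioo_mem_nhdsGT hu) fun ε hε =>
    sub_nonneg.2 (hchord ε hε))
  show f v / v ≤ f u / u
  rw [div_le_div_iff₀ hv hu]
  linarith

theorem hasDerivAt_exp_neg (x : ℝ) : HasDerivAt (fun u => exp (-u)) (-exp (-x)) x := by
  simpa using (hasDerivAt_neg x).exp

theorem hasDerivAt_one_sub_exp_neg_mul_pow (n : ℕ) (a t : ℝ) :
    HasDerivAt (fun s => (1 - exp (-(a * s))) ^ (n + 1))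
      ((n + 1) * (1 - exp (-(a * t))) ^ n * (a * exp (-(a * t)))) t := by
  have h := ((((hasDerivAt_id' t).const_mul a).fun_neg.exp).const_sub 1).pow (n + 1)
  refine h.congr_deriv ?_
  push_cast
  ring

theorem tendsto_one_sub_exp_neg_mul_pow (n : ℕ) {a : ℝ} (ha : 0 < a) :
    Tendsto (fun s => (1 - exp (-(a * s))) ^ (n + 1)) atTop (𝓝 1) := by
  have h := tendsto_exp_neg_atTop_nhds_zero.comp (tendsto_id.const_mul_atTop ha)
  simpa using (tendsto_const_nhds (x := (1 : ℝ))).sub h |>.pow (n + 1)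

/-- `erlangCDF n` is the CDF of `Γ(n + 1, 1)`. -/
noncomputable def erlangCDF (n : ℕ) (t : ℝ) : ℝ :=
  1 - exp (-t) * ∑ k ∈ Finset.range (n + 1), t ^ k / k !

theorem erlangCDF_succ (n : ℕ) (t : ℝ) :
    erlangCDF (n + 1) t = erlangCDF n t - t ^ (n + 1) * exp (-t) / (n + 1)! := by
  simp only [erlangCDF, Finset.sum_range_succ _ (n + 1)]
  ring

theorem erlangCDF_zero_right (n : ℕ) : erlangCDF n 0 = 0 := by
  simp [erlangCDF, Finset.sum_range_succ']

theorem hasDerivAt_erlangCDF (n : ℕ) (t : ℝ) :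
    HasDerivAt (erlangCDF n) (t ^ n * exp (-t) / n !) t := by
  induction n with
  | zero =>
    have h : erlangCDF 0 = fun s => 1 - exp (-s) := by ext s; simp [erlangCDF]
    simpa [h] using (hasDerivAt_exp_neg t).const_sub 1
  | succ n ih =>
    have hterm :=
      ((hasDerivAt_pow (n + 1) t).mul (hasDerivAt_exp_neg t)).div_const ((n + 1)! : ℝ)
    rw [funext (erlangCDF_succ n)]
    refine (ih.sub hterm).congr_deriv ?_
    rw [Nat.factorial_succ]
    push_cast
    field_simp
    ring

theorem tendsto_erlangCDF_atTop (n : ℕ) : Tendsto (erlangCDF n) atTop (𝓝 1) := by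
  have h : Tendsto (fun t => exp (-t) * ∑ k ∈ Finset.range (n + 1), t ^ k / k !) atTop (𝓝 0) := by
    have := tendsto_finsetSum (Finset.range (n + 1)) fun k _ =>
      (tendsto_pow_mul_exp_neg_atTop_nhds_zero k).div_const (k ! : ℝ)
    simp only [zero_div, Finset.sum_const_zero] at this
    refine this.congr fun t => ?_
    rw [Finset.mul_sum]
    exact Finset.sum_congr rfl fun k _ => by ring
  have h1 := (tendsto_const_nhds (x := (1 : ℝ))).sub h
  rw [sub_zero] at h1
  exact h1

theorem integral_Ioc_eq_erlangCDF (n : ℕ) {z : ℝ} (hz : 0 ≤ z) :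
    ∫ t in Ioc 0 z, t ^ n * exp (-t) / n ! = erlangCDF n z := by
  rw [← intervalIntegral.integral_of_le hz, intervalIntegral.integral_eq_sub_of_hasDerivAt
    (fun t _ => hasDerivAt_erlangCDF n t) (Continuous.intervalIntegrable (by fun_prop) 0 z),
    erlangCDF_zero_right, sub_zero]

theorem concaveOn_one_sub_exp_neg : ConcaveOn ℝ (Ioi 0) fun u => 1 - exp (-u) := by
  refine concaveOn_of_hasDerivWithinAt2_nonpos (convex_Ioi 0) (by fun_prop)
    (f' := fun u => exp (-u)) (f'' := fun u => -exp (-u)) (fun x _ => ?_) (fun x _ => ?_)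
    fun x _ => neg_nonpos.2 (exp_pos _).le
  · simpa using ((hasDerivAt_exp_neg x).const_sub 1).hasDerivWithinAt
  · exact (hasDerivAt_exp_neg x).hasDerivWithinAt

theorem antitoneOn_one_sub_exp_neg_div : AntitoneOn (fun u => (1 - exp (-u)) / u) (Ioi 0) :=
  concaveOn_one_sub_exp_neg.antitoneOn_div_self fun x hx => by
    simpa using exp_le_one_iff.2 (neg_nonpos.2 hx.le)

theorem sq_mul_exp_neg_le_one_sub_exp_neg_sq {u : ℝ} (hu : 0 ≤ u) :
    u ^ 2 * exp (-u) ≤ (1 - exp (-u)) ^ 2 := by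
  have hsinh := self_le_sinh_iff.2 (by positivity : 0 ≤ u / 2)
  rw [sinh_eq] at hsinh
  have e1 : exp (u / 2) * exp (-(u / 2)) = 1 := by rw [← exp_add]; simp
  have e2 : exp (-(u / 2)) * exp (-(u / 2)) = exp (-u) := by rw [← exp_add]; ring_nf
  have h : u * exp (-(u / 2)) ≤ 1 - exp (-u) := by nlinarith [exp_pos (-(u / 2))]
  calc u ^ 2 * exp (-u) = (u * exp (-(u / 2))) ^ 2 := by rw [← e2]; ring
    _ ≤ (1 - exp (-u)) ^ 2 := pow_le_pow_left₀ (by positivity) h 2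

theorem concaveOn_log_sub_log_one_sub_exp_neg :
    ConcaveOn ℝ (Ioi 0) fun u => log u - log (1 - exp (-u)) := by
  have hpos : ∀ x : ℝ, 0 < x → 0 < 1 - exp (-x) := fun x hx =>
    sub_pos.2 (exp_lt_one_iff.2 (neg_lt_zero.2 hx))
  refine concaveOn_of_hasDerivWithinAt2_nonpos (convex_Ioi 0)
    (f' := fun u => u⁻¹ - exp (-u) / (1 - exp (-u)))
    (f'' := fun u => -(u ^ 2)⁻¹ + exp (-u) / (1 - exp (-u)) ^ 2) ?_ (fun x hx => ?_)
    (fun x hx => ?_) fun x hx => ?_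
  · exact ContinuousOn.sub (continuousOn_log.mono fun x hx => ne_of_gt hx)
      (ContinuousOn.log (by fun_prop) fun x hx => (hpos x hx).ne')
  all_goals
    rw [interior_Ioi] at hx
    replace hx : 0 < x := hx
  · exact ((hasDerivAt_log hx.ne').sub (((hasDerivAt_exp_neg x).const_sub 1).log
      (hpos x hx).ne')).hasDerivWithinAt.congr_deriv (by ring)
  · refine ((hasDerivAt_inv hx.ne').sub ((hasDerivAt_exp_neg x).div
      ((hasDerivAt_exp_neg x).const_sub 1) (hpos x hx).ne')).hasDerivWithinAt.congr_deriv ?_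
    field_simp
    ring
  · have h := sq_mul_exp_neg_le_one_sub_exp_neg_sq hx.le
    rw [neg_add_nonpos_iff, div_le_iff₀ (pow_pos (hpos x hx) 2), inv_mul_eq_div,
      le_div_iff₀ (pow_pos hx 2)]
    linarith

theorem antitoneOn_log_sub_log_one_sub_exp_neg_div :
    AntitoneOn (fun u => (log u - log (1 - exp (-u))) / u) (Ioi 0) :=
  concaveOn_log_sub_log_one_sub_exp_neg.antitoneOn_div_self fun x hx => by
    have h1 : 0 < 1 - exp (-x) := sub_pos.2 (exp_lt_one_iff.2 (neg_lt_zero.2 hx))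
    have h2 : 1 - exp (-x) ≤ x := by linarith [add_one_le_exp (-x)]
    linarith [log_le_log h1 h2]

theorem erlangCDF_le_one_sub_exp_neg_pow (n : ℕ) {z : ℝ} (hz : 0 ≤ z) :
    erlangCDF n z ≤ (1 - exp (-z)) ^ (n + 1) := by
  have hderiv (t : ℝ) : HasDerivAt (fun s => (1 - exp (-s)) ^ (n + 1) - erlangCDF n s)
      ((n + 1) * (1 - exp (-t)) ^ n * exp (-t) - t ^ n * exp (-t) / n !) t := by
    simpa using (hasDerivAt_one_sub_exp_neg_mul_pow n 1 t).fun_sub (hasDerivAt_erlangCDF n t)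
  have hlim : Tendsto (fun s => (1 - exp (-s)) ^ (n + 1) - erlangCDF n s) atTop (𝓝 0) := by
    simpa using (tendsto_one_sub_exp_neg_mul_pow n one_pos).sub (tendsto_erlangCDF_atTop n)
  have hk : AntitoneOn (fun t => (n + 1)! * ((1 - exp (-t)) / t) ^ n - 1) (Ioi 0) :=
    fun x hx y (hy : 0 < y) hxy => by
      have h0 : 0 ≤ (1 - exp (-y)) / y :=
        div_nonneg (by simpa using exp_le_one_iff.2 (neg_nonpos.2 hy.le)) hy.le
      have := antitoneOn_one_sub_exp_neg_div hx hy hxy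
      dsimp only
      gcongr
  refine sub_nonneg.1 (nonneg_of_hasDerivAt_of_sign_change hderiv (by simp [erlangCDF_zero_right])
    hlim hk (fun t ht => ?_) hz)
  have hw : 0 < t ^ n * exp (-t) / n ! := by positivity
  have hfactor : (n + 1) * (1 - exp (-t)) ^ n * exp (-t) - t ^ n * exp (-t) / n ! =
      t ^ n * exp (-t) / n ! * ((n + 1)! * ((1 - exp (-t)) / t) ^ n - 1) := by
    rw [div_pow, Nat.factorial_succ]
    push_cast
    field_simp
  rw [hfactor, ← smul_eq_mul, smul_neg_iff_of_pos_left hw]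

theorem deriv_erlangCDF_sub_one_sub_exp_neg_mul_pow_neg_iff (n : ℕ) {a t : ℝ} (ha : 0 < a)
    (haT : a ^ (n + 1) * (n + 1)! = 1) (ht : 0 < t) :
    t ^ n * exp (-t) / (n ! : ℝ) - (n + 1) * (1 - exp (-(a * t))) ^ n * (a * exp (-(a * t))) < 0 ↔
      n * ((log (a * t) - log (1 - exp (-(a * t)))) / (a * t)) - (1 - a) / a < 0 := by
  have hm : 0 < 1 - exp (-(a * t)) := sub_pos.2 (exp_lt_one_iff.2 (by nlinarith))
  have hw : 0 < (n + 1) * a * exp (-(a * t)) := by positivity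
  have hfactor :
      t ^ n * exp (-t) / (n ! : ℝ) - (n + 1) * (1 - exp (-(a * t))) ^ n * (a * exp (-(a * t))) =
        (n + 1) * a * exp (-(a * t)) *
          ((a * t) ^ n * exp ((a - 1) * t) - (1 - exp (-(a * t))) ^ n) := by
    have hexp : exp (-(a * t)) * exp ((a - 1) * t) = exp (-t) := by rw [← exp_add]; ring_nf
    have hfac : (n + 1) * a ^ (n + 1) = (n ! : ℝ)⁻¹ := by
      refine eq_inv_of_mul_eq_one_left ?_
      rw [Nat.factorial_succ] at haT
      push_cast at haT
      linear_combination haT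
    linear_combination (-(n + 1) * a ^ (n + 1) * t ^ n) * hexp - t ^ n * exp (-t) * hfac
  rw [hfactor, ← smul_eq_mul, smul_neg_iff_of_pos_left hw, sub_neg,
    ← log_lt_log_iff (by positivity) (by positivity), log_mul (by positivity) (exp_pos _).ne',
    log_pow, log_exp, log_pow, sub_neg, mul_div_assoc', div_lt_div_iff₀ (mul_pos ha ht) ha]
  constructor <;> intro h <;> nlinarith

theorem one_sub_exp_neg_mul_pow_le_erlangCDF (n : ℕ) {a : ℝ} (ha : 0 < a)
    (haT : a ^ (n + 1) * (n + 1)! = 1) {z : ℝ} (hz : 0 ≤ z) :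
    (1 - exp (-(a * z))) ^ (n + 1) ≤ erlangCDF n z := by
  have hlim : Tendsto (fun s => erlangCDF n s - (1 - exp (-(a * s))) ^ (n + 1)) atTop (𝓝 0) := by
    simpa using (tendsto_erlangCDF_atTop n).sub (tendsto_one_sub_exp_neg_mul_pow n ha)
  have hk : AntitoneOn
      (fun t => n * ((log (a * t) - log (1 - exp (-(a * t)))) / (a * t)) - (1 - a) / a) (Ioi 0) :=
    fun x (hx : 0 < x) y (hy : 0 < y) hxy => by
      have := antitoneOn_log_sub_log_one_sub_exp_neg_div (mul_pos ha hx) (mul_pos ha hy)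
        (mul_le_mul_of_nonneg_left hxy ha.le)
      dsimp only at this ⊢
      gcongr
  exact sub_nonneg.1 (nonneg_of_hasDerivAt_of_sign_change
    (fun t => (hasDerivAt_erlangCDF n t).fun_sub (hasDerivAt_one_sub_exp_neg_mul_pow n a t))
    (by simp [erlangCDF_zero_right]) hlim hk
    (fun t ht => deriv_erlangCDF_sub_one_sub_exp_neg_mul_pow_neg_iff n ha haT ht) hz)

/-- Alzer's inequality: if `Z ~ Γ(T,1)` with CDF `F`, then
`(1 - e^{-a z})^T ≤ F z ≤ (1 - e^{-z})^T` for `z ≥ 0`, where `a = (T!)^{-1/T}`. -/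
theorem alzer_gamma_cdf_bounds (T : ℕ) (hT : 0 < T) (F : ℝ → ℝ)
    (hF : ∀ z : ℝ, F z =
      ∫ t in Set.Ioc (0:ℝ) z, t ^ (T - 1) * Real.exp (-t) / (Nat.factorial (T - 1) : ℝ))
    (a : ℝ) (ha : a = ((Nat.factorial T : ℝ)) ^ (-(1:ℝ) / T))
    (z : ℝ) (hz : 0 ≤ z) :
    (1 - Real.exp (-(a * z))) ^ T ≤ F z ∧ F z ≤ (1 - Real.exp (-z)) ^ T := by
  obtain ⟨n, rfl⟩ : ∃ n, T = n + 1 := ⟨T - 1, by omega⟩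
  have hfac : (0 : ℝ) < (n + 1)! := by positivity
  have ha₀ : 0 < a := ha ▸ rpow_pos_of_pos hfac _
  have haT : a ^ (n + 1) * (n + 1)! = 1 := by
    rw [ha, ← rpow_natCast, ← rpow_mul hfac.le, div_mul_cancel₀ _ (by positivity), rpow_neg_one,
      inv_mul_cancel₀ hfac.ne']
  rw [hF, Nat.add_sub_cancel, integral_Ioc_eq_erlangCDF n hz]
  exact ⟨one_sub_exp_neg_mul_pow_le_erlangCDF n ha₀ haT hz, erlangCDF_le_one_sub_exp_neg_pow n hz⟩
end

section
/- If X² ~ Beta(k, K-k), i.e., X has density f(x) = (2(K-1)!/((k-1)!(K-k-1)!)) x^{2k-1}(1-x²)^{K-k-1} on [0,1], then for any c ≥ 0, ∫_0^1 f(x)/(1+c x²)^K dx = (1+c)^{-k}. -/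
/-!
Substituting `u = x²` turns the integral into `∫₀¹ u^(k-1) (1-u)^(K-k-1) / (1 + c u)^K du`
(up to the Beta normalisation). The Möbius substitution `t = (1 + c) u / (1 + c u)` fixes `[0, 1]`,
with `1 - t = (1 - u) / (1 + c u)` and `dt = (1 + c) / (1 + c u)² du`; since the exponents
`(k - 1) + (K - k - 1) + 2` add up to `K`, it absorbs every factor `1 + c u` and leaves
`(1 + c)^(-k)` times the Beta integral `∫₀¹ t^(k-1) (1-t)^(K-k-1) dt = (k-1)! (K-k-1)! / (K-1)!`.
-/

open intervalIntegral Set Nat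

theorem integral_pow_mul_one_sub_pow_succ (a b : ℕ) :
    ∫ x in (0:ℝ)..1, x ^ a * (1 - x) ^ (b + 1) =
      (b + 1) / (a + 1) * ∫ x in (0:ℝ)..1, x ^ (a + 1) * (1 - x) ^ b := by
  have hu (x : ℝ) (_ : x ∈ uIcc (0:ℝ) 1) : HasDerivAt (fun x : ℝ => (1 - x) ^ (b + 1))
      (-((b + 1) * (1 - x) ^ b)) x :=
    (((hasDerivAt_id' x).const_sub 1).fun_pow (b + 1)).congr_deriv (by push_cast; ring)
  have hv (x : ℝ) (_ : x ∈ uIcc (0:ℝ) 1) :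
      HasDerivAt (fun x : ℝ => x ^ (a + 1) / (a + 1)) (x ^ a) x :=
    ((hasDerivAt_pow (a + 1) x).div_const ((a:ℝ) + 1)).congr_deriv (by field_simp; simp)
  have h := integral_mul_deriv_eq_deriv_mul hu hv
    ((by fun_prop : Continuous _).intervalIntegrable _ _)
    ((by fun_prop : Continuous _).intervalIntegrable _ _)
  simp only [one_pow, sub_self, zero_pow (succ_ne_zero _), zero_div, mul_zero, zero_mul,
    sub_zero, zero_sub, ← integral_neg, ← integral_const_mul] at h ⊢
  calc _ = ∫ x in (0:ℝ)..1, (1 - x) ^ (b + 1) * x ^ a := by simp only [mul_comm]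
    _ = _ := h
    _ = _ := by congr 1; ext x; ring

theorem integral_pow_mul_one_sub_pow (a b : ℕ) :
    ∫ x in (0:ℝ)..1, x ^ a * (1 - x) ^ b = (a ! * b ! : ℝ) / (a + b + 1)! := by
  induction b generalizing a with
  | zero =>
    simp only [pow_zero, mul_one, integral_pow, factorial_zero, cast_one, add_zero,
      factorial_succ, cast_mul]
    field_simp
    norm_num
  | succ b ih =>
    rw [integral_pow_mul_one_sub_pow_succ, ih, show a + 1 + b + 1 = a + (b + 1) + 1 by ring]
    push_cast [factorial_succ]
    field_simp

theorem integral_comp_sq_mul_two_mul {g : ℝ → ℝ} (hg : ContinuousOn g (Icc 0 1)) :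
    ∫ x in (0:ℝ)..1, g (x ^ 2) * (2 * x) = ∫ u in (0:ℝ)..1, g u := by
  have hmaps : (fun x : ℝ => x ^ 2) '' uIcc 0 1 ⊆ Icc 0 1 := by
    rintro _ ⟨x, hx, rfl⟩
    rw [uIcc_of_le zero_le_one] at hx
    exact ⟨sq_nonneg x, pow_le_one₀ hx.1 hx.2⟩
  simpa using integral_comp_mul_deriv' (f := fun x : ℝ => x ^ 2) (g := g)
    (fun x _ => (hasDerivAt_pow 2 x).congr_deriv (by ring)) (by fun_prop) (hg.mono hmaps)

theorem one_add_mul_pos_of_mem_Icc {c u : ℝ} (hc : -1 < c) (hu : u ∈ Icc (0:ℝ) 1) :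
    0 < 1 + c * u := by
  rcases le_total 0 c with hc0 | hc0
  · nlinarith [mul_nonneg hc0 hu.1]
  · nlinarith [mul_nonneg_of_nonpos_of_nonpos hc0 (sub_nonpos.2 hu.2)]

theorem integral_comp_mobius_mul_deriv {g : ℝ → ℝ} (hg : Continuous g) {c : ℝ} (hc : -1 < c) :
    ∫ u in (0:ℝ)..1, g ((1 + c) * u / (1 + c * u)) * ((1 + c) / (1 + c * u) ^ 2) =
      ∫ t in (0:ℝ)..1, g t := by
  have hpos : ∀ u ∈ uIcc (0:ℝ) 1, 0 < 1 + c * u := by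
    rw [uIcc_of_le zero_le_one]
    exact fun u hu => one_add_mul_pos_of_mem_Icc hc hu
  have hderiv (u : ℝ) (hu : u ∈ uIcc (0:ℝ) 1) :
      HasDerivAt (fun u => (1 + c) * u / (1 + c * u)) ((1 + c) / (1 + c * u) ^ 2) u := by
    refine (((hasDerivAt_id' u).const_mul (1 + c)).div
      (((hasDerivAt_id' u).const_mul c).const_add 1) (hpos u hu).ne').congr_deriv ?_
    field_simp
    ring
  have hcont : ContinuousOn (fun u => (1 + c) / (1 + c * u) ^ 2) (uIcc 0 1) :=
    continuousOn_const.div (by fun_prop) fun u hu => (pow_pos (hpos u hu) 2).ne'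
  simpa [(by linarith : 1 + c ≠ 0)] using integral_comp_mul_deriv hderiv hcont hg

theorem integral_pow_mul_one_sub_pow_div_one_add_mul_pow (m b : ℕ) {c : ℝ} (hc : -1 < c) :
    ∫ u in (0:ℝ)..1, u ^ m * (1 - u) ^ b / (1 + c * u) ^ (m + b + 2) =
      (∫ t in (0:ℝ)..1, t ^ m * (1 - t) ^ b) / (1 + c) ^ (m + 1) := by
  rw [← integral_comp_mobius_mul_deriv (g := fun t => t ^ m * (1 - t) ^ b) (by fun_prop) hc,
    ← integral_div]
  refine integral_congr fun u hu => ?_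
  rw [uIcc_of_le zero_le_one] at hu
  have hpos := one_add_mul_pos_of_mem_Icc hc hu
  have hc1 : 0 < 1 + c := by linarith
  have hsub : 1 - (1 + c) * u / (1 + c * u) = (1 - u) / (1 + c * u) := by
    field_simp
    ring
  simp only [hsub, div_pow, mul_pow]
  field_simp
  ring

theorem beta_ratio_integral_general (K k : ℕ) (hk : 1 ≤ k) (hkK : k ≤ K - 1)
    (c : ℝ) (hc : 0 ≤ c) :
    (∫ x in (0:ℝ)..1,
        (2 * (Nat.factorial (K - 1) : ℝ) /
          ((Nat.factorial (k - 1) : ℝ) * (Nat.factorial (K - k - 1) : ℝ)) *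
            x ^ (2 * k - 1) * (1 - x ^ 2) ^ (K - k - 1)) / (1 + c * x ^ 2) ^ K)
      = 1 / (1 + c) ^ k := by
  obtain ⟨m, b, rfl, rfl⟩ : ∃ m b, k = m + 1 ∧ K = m + b + 2 :=
    ⟨k - 1, K - k - 1, by omega, by omega⟩
  rw [show 2 * (m + 1) - 1 = 2 * m + 1 by omega, show m + 1 - 1 = m by omega,
    show m + b + 2 - (m + 1) - 1 = b by omega, show m + b + 2 - 1 = m + b + 1 by omega]
  set h : ℝ → ℝ := fun u => u ^ m * (1 - u) ^ b / (1 + c * u) ^ (m + b + 2)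
  have hcont : ContinuousOn h (Icc 0 1) := by
    refine ContinuousOn.div (by fun_prop) (by fun_prop) fun u hu => ?_
    exact pow_ne_zero _ (one_add_mul_pos_of_mem_Icc (by linarith) hu).ne'
  calc _ = ∫ x in (0:ℝ)..1, ((m + b + 1)! / (m ! * b !) : ℝ) * (h (x ^ 2) * (2 * x)) :=
        integral_congr fun x _ => by simp only [h]; ring
    _ = ((m + b + 1)! / (m ! * b !) : ℝ) * ∫ u in (0:ℝ)..1, h u := by
        rw [integral_const_mul, integral_comp_sq_mul_two_mul hcont]
    _ = 1 / (1 + c) ^ (m + 1) := by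
        rw [integral_pow_mul_one_sub_pow_div_one_add_mul_pow m b (by linarith),
          integral_pow_mul_one_sub_pow]
        field_simp

/-- If `X² ~ Beta(k, K-k)`, then for `c ≥ 0`, `E[(1+cX²)^{-K}] = (1+c)^{-k}`. -/
theorem beta_ratio_integral (K k : ℕ) (hk : 1 ≤ k) (hkK : k ≤ K - 1) (hK : 2 ≤ K)
    (c : ℝ) (hc : 0 ≤ c) :
    (∫ x in (0:ℝ)..1,
        (2 * (Nat.factorial (K - 1) : ℝ) /
          ((Nat.factorial (k - 1) : ℝ) * (Nat.factorial (K - k - 1) : ℝ)) *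
            x ^ (2 * k - 1) * (1 - x ^ 2) ^ (K - k - 1)) / (1 + c * x ^ 2) ^ K)
      = 1 / (1 + c) ^ k :=
  beta_ratio_integral_general K k hk hkK c hc
end

section
/- The function f(x) = Σ_{i=0}^{k-1} ((K-1)! / ((K-k+i)!(k-1-i)!)) x^{2(k-1-i)} (1-x²)^{K-k+i} on [0,1] satisfies f(0)=1, f(1)=0, and its derivative equals -(2(K-1)!/((k-1)!(K-k-1)!)) x^{2k-1}(1-x²)^{K-k-1}, i.e., 1-f is the CDF of the distance-ratio δ_k. -/
/-!
Substituting `t = x²` and reindexing by `j = k - 1 - i` turns `f x` into the partial Bernstein sum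
`∑_{j<k} b_{K-1,j}(t)`, the probability that at most `k - 1` of `K - 1` independent uniform
points fall below `t`. Its value is `1` at `t = 0` and `0` at `t = 1`, and since
`b'_{n,j+1} = n (b_{n-1,j} - b_{n-1,j+1})` its derivative telescopes to `-n b_{n-1,k-1}`.
-/

open Polynomial Finset Nat

namespace bernsteinPolynomial

section CommRing

variable (R : Type*) [CommRing R]

theorem derivative_sum_range (n m : ℕ) :
    derivative (∑ j ∈ range (m + 1), bernsteinPolynomial R n j) =
      -(n : R[X]) * bernsteinPolynomial R (n - 1) m := by
  induction m with
  | zero => simpa using derivative_zero R n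
  | succ m ih =>
    rw [sum_range_succ, derivative_add, ih, derivative_succ]
    ring

theorem eval_zero_sum_range (n m : ℕ) :
    (∑ j ∈ range (m + 1), bernsteinPolynomial R n j).eval 0 = 1 := by
  simp [eval_finsetSum, eval_at_0]

theorem eval_one_sum_range {n m : ℕ} (hm : m ≤ n) :
    (∑ j ∈ range m, bernsteinPolynomial R n j).eval 1 = 0 := by
  rw [eval_finsetSum]
  refine sum_eq_zero fun j hj => ?_
  rw [eval_at_1, if_neg (by grind)]

end CommRing

theorem eval_eq_factorial {𝕜 : Type*} [Field 𝕜] [CharZero 𝕜] {n ν : ℕ} (h : ν ≤ n)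
    (t : 𝕜) :
    (bernsteinPolynomial 𝕜 n ν).eval t =
      n ! / (ν ! * (n - ν)!) * t ^ ν * (1 - t) ^ (n - ν) := by
  simp [bernsteinPolynomial, Nat.cast_choose 𝕜 h]

end bernsteinPolynomial

theorem sum_range_factorial_eq_eval_sum_bernstein {K k : ℕ} (hkK : k ≤ K - 1) (t : ℝ) :
    ∑ i ∈ range k, ((K - 1)! : ℝ) / ((K - k + i)! * (k - 1 - i)!) * t ^ (k - 1 - i) *
        (1 - t) ^ (K - k + i) =
      (∑ j ∈ range k, bernsteinPolynomial ℝ (K - 1) j).eval t := by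
  rw [eval_finsetSum, ← sum_range_reflect (fun j => (bernsteinPolynomial ℝ (K - 1) j).eval t) k]
  refine sum_congr rfl fun i hi => ?_
  have hi : i < k := mem_range.mp hi
  rw [bernsteinPolynomial.eval_eq_factorial (by omega),
    show K - 1 - (k - 1 - i) = K - k + i by omega, mul_comm ((K - k + i)! : ℝ)]

theorem distance_ratio_ccdf_general (K k : ℕ) (hk : 1 ≤ k) (hkK : k ≤ K - 1)
    (f : ℝ → ℝ)
    (hf : ∀ x : ℝ, f x = ∑ i ∈ Finset.range k,
        (Nat.factorial (K - 1) : ℝ) /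
          ((Nat.factorial (K - k + i) : ℝ) * (Nat.factorial (k - 1 - i) : ℝ)) *
            x ^ (2 * (k - 1 - i)) * (1 - x ^ 2) ^ (K - k + i)) :
    f 0 = 1 ∧ f 1 = 0 ∧
      ∀ x : ℝ, deriv f x =
        -(2 * (Nat.factorial (K - 1) : ℝ) /
            ((Nat.factorial (k - 1) : ℝ) * (Nat.factorial (K - k - 1) : ℝ)) *
              x ^ (2 * k - 1) * (1 - x ^ 2) ^ (K - k - 1)) := by
  obtain ⟨m, rfl⟩ : ∃ m, k = m + 1 := ⟨k - 1, by omega⟩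
  set P : ℝ[X] := ∑ j ∈ range (m + 1), bernsteinPolynomial ℝ (K - 1) j
  have hfP : ∀ x, f x = P.eval (x ^ 2) := fun x => by
    simp only [hf, pow_mul, sum_range_factorial_eq_eval_sum_bernstein hkK, P]
  refine ⟨?_, ?_, fun x => ?_⟩
  · simpa [hfP] using bernsteinPolynomial.eval_zero_sum_range ℝ (K - 1) m
  · simpa [hfP] using bernsteinPolynomial.eval_one_sum_range ℝ hkK
  have hsq : HasDerivAt (fun y : ℝ => y ^ 2) (2 * x) x := by simpa using hasDerivAt_pow 2 x
  have hd : HasDerivAt f (P.derivative.eval (x ^ 2) * (2 * x)) x := by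
    rw [funext hfP]
    exact (P.hasDerivAt (x ^ 2)).comp x hsq
  rw [hd.deriv, bernsteinPolynomial.derivative_sum_range, eval_mul, eval_neg, eval_natCast,
    bernsteinPolynomial.eval_eq_factorial (by omega),
    show K - 1 - 1 - m = K - (m + 1) - 1 by omega, show 2 * (m + 1) - 1 = 2 * m + 1 by omega,
    Nat.add_sub_cancel,
    ← Nat.mul_factorial_pred (show K - 1 ≠ 0 by omega), ← pow_mul]
  push_cast
  ring

/-- The complementary CDF of the distance ratio `δ_k`:
`f(x) = ∑_{i=0}^{k-1} ((K-1)!/((K-k+i)!(k-1-i)!)) x^{2(k-1-i)}(1-x²)^{K-k+i}` satisfies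
`f(0)=1`, `f(1)=0` and `f' (x) = -(2(K-1)!/((k-1)!(K-k-1)!)) x^{2k-1}(1-x²)^{K-k-1}`. -/
theorem distance_ratio_ccdf (K k : ℕ) (hk : 1 ≤ k) (hkK : k ≤ K - 1) (hK : 2 ≤ K)
    (f : ℝ → ℝ)
    (hf : ∀ x : ℝ, f x = ∑ i ∈ Finset.range k,
        (Nat.factorial (K - 1) : ℝ) /
          ((Nat.factorial (K - k + i) : ℝ) * (Nat.factorial (k - 1 - i) : ℝ)) *
            x ^ (2 * (k - 1 - i)) * (1 - x ^ 2) ^ (K - k + i)) :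
    f 0 = 1 ∧ f 1 = 0 ∧
      ∀ x : ℝ, deriv f x =
        -(2 * (Nat.factorial (K - 1) : ℝ) /
            ((Nat.factorial (k - 1) : ℝ) * (Nat.factorial (K - k - 1) : ℝ)) *
              x ^ (2 * k - 1) * (1 - x ^ 2) ^ (K - k - 1)) :=
  distance_ratio_ccdf_general K k hk hkK f hf
end

section
/- Let P_cov(k) for k = 1,…,K be a non-increasing sequence of numbers in [0,1]. Then the function b ↦ Σ_{k=1}^K b(1-b)^{k-1} P_cov(k) is concave on [0,1]. -/
open Finset Set

lemma my_concaveOn_sum {ι : Type*} (t : Finset ι) (s : Set ℝ) (hs : Convex ℝ s)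
    (f : ι → ℝ → ℝ) (hf : ∀ i ∈ t, ConcaveOn ℝ s (f i)) :
    ConcaveOn ℝ s (fun x => ∑ i ∈ t, f i x) := by
  classical
  induction t using Finset.cons_induction with
  | empty => simpa using concaveOn_const 0 hs
  | cons a t ha ih =>
    simp only [Finset.sum_cons]
    exact (hf a (Finset.mem_cons_self a t)).add
      (ih fun i hi => hf i (Finset.mem_cons_of_mem hi))

lemma g_concave (n : ℕ) : ConcaveOn ℝ (Set.Icc (0:ℝ) 1) (fun b => 1 - (1 - b) ^ n) := by
  have h1 : ConvexOn ℝ (Set.Icc (0:ℝ) 1) (fun b : ℝ => (1 - b) ^ n) := by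
    have := (convexOn_pow (𝕜 := ℝ) n).comp_affineMap
      (AffineMap.const ℝ ℝ (1:ℝ) - AffineMap.id ℝ ℝ)
    refine ConvexOn.subset (by exact this) ?_ (convex_Icc 0 1)
    intro x hx
    simp only [Set.mem_preimage, AffineMap.coe_sub, AffineMap.coe_const, AffineMap.coe_id]
    simpa using sub_nonneg.mpr hx.2
  exact ((concaveOn_const (1:ℝ) (convex_Icc 0 1)).sub h1)

lemma abel_identity (K : ℕ) (P : ℕ → ℝ) (b : ℝ) :
    ∑ k ∈ Finset.Icc 1 K, P k * ((1 - b) ^ (k - 1) - (1 - b) ^ k)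
      = ∑ k ∈ Finset.Icc 1 K,
          (P k - if k < K then P (k + 1) else 0) * (1 - (1 - b) ^ k) := by
  induction K with
  | zero => simp
  | succ K ih =>
    rcases Nat.eq_zero_or_pos K with hK0 | hKpos
    · subst hK0; simp
    have hins : Finset.Icc 1 (K + 1) = insert (K + 1) (Finset.Icc 1 K) := by
      ext x; simp only [Finset.mem_Icc, Finset.mem_insert]; omega
    have hKmem : K ∈ Finset.Icc 1 K := Finset.mem_Icc.mpr ⟨hKpos, le_refl K⟩
    rw [hins, Finset.sum_insert (by simp), Finset.sum_insert (by simp), ih]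
    have hsplit : ∑ k ∈ Finset.Icc 1 K,
        (P k - if k < K + 1 then P (k + 1) else 0) * (1 - (1 - b) ^ k)
        = (∑ k ∈ Finset.Icc 1 K, (P k - if k < K then P (k + 1) else 0) * (1 - (1 - b) ^ k))
          - P (K + 1) * (1 - (1 - b) ^ K) := by
      have hdiff : (∑ k ∈ Finset.Icc 1 K, (P k - if k < K then P (k + 1) else 0) * (1 - (1 - b) ^ k))
          - (∑ k ∈ Finset.Icc 1 K, (P k - if k < K + 1 then P (k + 1) else 0) * (1 - (1 - b) ^ k))
          = P (K + 1) * (1 - (1 - b) ^ K) := by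
        rw [← Finset.sum_sub_distrib]
        rw [Finset.sum_eq_single_of_mem K hKmem]
        · simp only [lt_irrefl, if_false, if_pos (Nat.lt_succ_self K)]
          ring
        · intro k hk hkne
          have hkK : k < K := lt_of_le_of_ne (Finset.mem_Icc.mp hk).2 hkne
          simp [hkK, Nat.lt_succ_of_lt hkK]
      linarith
    rw [hsplit]
    have : (K + 1 < K + 1) = False := by simp
    simp only [lt_irrefl, if_false, sub_zero, Nat.add_sub_cancel]
    ring

/-- If `P_cov(1) ≥ … ≥ P_cov(K)` are numbers in `[0,1]`, then
`b ↦ ∑_{k=1}^K b(1-b)^{k-1} P_cov(k)` is concave on `[0,1]`. -/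
theorem stp_concave (K : ℕ) (hK : 1 ≤ K) (P : ℕ → ℝ)
    (hmono : ∀ k, 1 ≤ k → k < K → P (k + 1) ≤ P k)
    (hmem : ∀ k, 1 ≤ k → k ≤ K → P k ∈ Set.Icc (0:ℝ) 1) :
    ConcaveOn ℝ (Set.Icc (0:ℝ) 1)
      (fun b => ∑ k ∈ Finset.Icc 1 K, b * (1 - b) ^ (k - 1) * P k) := by
  have heq : (fun b : ℝ => ∑ k ∈ Finset.Icc 1 K, b * (1 - b) ^ (k - 1) * P k)
      = fun b => ∑ k ∈ Finset.Icc 1 K,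
          (P k - if k < K then P (k + 1) else 0) * (1 - (1 - b) ^ k) := by
    funext b
    rw [← abel_identity K P b]
    refine Finset.sum_congr rfl fun k hk => ?_
    have hk1 : 1 ≤ k := (Finset.mem_Icc.mp hk).1
    have : (1 - b) ^ (k - 1) - (1 - b) ^ k = b * (1 - b) ^ (k - 1) := by
      nth_rewrite 2 [show k = (k - 1) + 1 by omega]
      ring
    rw [this]; ring
  rw [heq]
  refine my_concaveOn_sum _ _ (convex_Icc 0 1) _ fun k hk => ?_
  have hk1 := (Finset.mem_Icc.mp hk).1
  have hk2 := (Finset.mem_Icc.mp hk).2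
  have hc : 0 ≤ P k - if k < K then P (k + 1) else 0 := by
    split_ifs with h
    · linarith [hmono k hk1 h]
    · linarith [(hmem k hk1 hk2).1]
  simpa using (g_concave k).smul hc
end

section
/- Let P(1) ≥ P(2) ≥ … ≥ P(K) ≥ 0 and b ∈ [0,1]. Then Σ_{k=1}^K (k-1)(1-b)^{k-3}(kb-2) P(k) ≤ K(K-1)(1-b)^{K-3}(b-1) P(K) ≤ 0. -/
/-!
The coefficients `c k = (k-1)(1-b)^(k-3)(kb-2)` telescope: their partial sums are
`S n = n(n-1)(1-b)^(n-3)(b-1) = -n(n-1)(1-b)^(n-2) ≤ 0`. Summation by parts,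
`∑ c k P k = ∑_{n<K} S n (P n - P (n+1)) + S K P K`, then bounds the sum by `S K P K`,
since every `S n` is nonpositive and `P` is nonincreasing.
-/

open Finset

theorem sum_Icc_mul_le_of_partialSum_nonpos {R : Type*} [CommRing R] [LinearOrder R]
    [IsStrictOrderedRing R] {c P : ℕ → R} {K : ℕ}
    (hc : ∀ n < K, ∑ k ∈ Icc 1 n, c k ≤ 0)
    (hP : ∀ k, 1 ≤ k → k < K → P (k + 1) ≤ P k) :
    ∑ k ∈ Icc 1 K, c k * P k ≤ (∑ k ∈ Icc 1 K, c k) * P K := by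
  induction K with
  | zero => simp
  | succ K ih =>
    rcases K.eq_zero_or_pos with rfl | hK
    · simp
    rw [sum_Icc_succ_top K.succ_pos, sum_Icc_succ_top K.succ_pos, add_mul]
    gcongr ?_ + _
    calc ∑ k ∈ Icc 1 K, c k * P k
        ≤ (∑ k ∈ Icc 1 K, c k) * P K :=
          ih (fun n hn => hc n (by omega)) (fun k hk hkK => hP k hk (by omega))
      _ ≤ (∑ k ∈ Icc 1 K, c k) * P (K + 1) :=
          mul_le_mul_of_nonpos_left (hP K hK K.lt_succ_self) (hc K K.lt_succ_self)

theorem sum_Icc_sub_one_mul_zpow_mul {b : ℝ} (hb : b ≠ 1) (K : ℕ) :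
    ∑ k ∈ Icc 1 K, ((k : ℝ) - 1) * (1 - b) ^ ((k : ℤ) - 3) * ((k : ℝ) * b - 2)
      = (K : ℝ) * ((K : ℝ) - 1) * (1 - b) ^ ((K : ℤ) - 3) * (b - 1) := by
  induction K with
  | zero => simp
  | succ K ih =>
    have h : (1 : ℝ) - b ≠ 0 := sub_ne_zero.2 hb.symm
    rw [sum_Icc_succ_top K.succ_pos, ih]
    push_cast
    rw [show (K : ℤ) + 1 - 3 = (K : ℤ) - 3 + 1 by ring, zpow_add_one₀ h]
    ring

theorem natCast_mul_sub_one_mul_zpow_mul_nonpos {b : ℝ} (hb : b < 1) (n : ℕ) :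
    (n : ℝ) * ((n : ℝ) - 1) * (1 - b) ^ ((n : ℤ) - 3) * (b - 1) ≤ 0 := by
  have hn : 0 ≤ (n : ℝ) * ((n : ℝ) - 1) := by
    rcases n.eq_zero_or_pos with rfl | hn
    · simp
    · exact mul_nonneg n.cast_nonneg (sub_nonneg.2 (by exact_mod_cast hn))
  exact mul_nonpos_of_nonneg_of_nonpos
    (mul_nonneg hn (zpow_pos (sub_pos.2 hb) _).le) (sub_nonpos.2 hb.le)

theorem stp_second_derivative_bound_general (K : ℕ) (b : ℝ) (hb : b ∈ Set.Ico (0:ℝ) 1)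
    (P : ℕ → ℝ) (hmono : ∀ k, 1 ≤ k → k < K → P (k + 1) ≤ P k)
    (hnonneg : 0 ≤ P K) :
    (∑ k ∈ Finset.Icc 1 K,
        ((k : ℝ) - 1) * (1 - b) ^ ((k : ℤ) - 3) * ((k : ℝ) * b - 2) * P k)
      ≤ (K : ℝ) * ((K : ℝ) - 1) * (1 - b) ^ ((K : ℤ) - 3) * (b - 1) * P K ∧
    (K : ℝ) * ((K : ℝ) - 1) * (1 - b) ^ ((K : ℤ) - 3) * (b - 1) * P K ≤ 0 := by
  have hsum := sum_Icc_sub_one_mul_zpow_mul hb.2.ne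
  have hS := natCast_mul_sub_one_mul_zpow_mul_nonpos hb.2
  refine ⟨?_, mul_nonpos_of_nonpos_of_nonneg (hS K) hnonneg⟩
  rw [← hsum]
  exact sum_Icc_mul_le_of_partialSum_nonpos (fun n _ => hsum n ▸ hS n) hmono

/-- For `P(1) ≥ … ≥ P(K) ≥ 0` and `b ∈ [0,1)`, with `K ≥ 3`:
`∑_{k=1}^K (k-1)(1-b)^{k-3}(kb-2)P(k) ≤ K(K-1)(1-b)^{K-3}(b-1)P(K) ≤ 0`. -/
theorem stp_second_derivative_bound (K : ℕ) (hK : 3 ≤ K) (b : ℝ) (hb : b ∈ Set.Ico (0:ℝ) 1)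
    (P : ℕ → ℝ) (hmono : ∀ k, 1 ≤ k → k < K → P (k + 1) ≤ P k)
    (hnonneg : 0 ≤ P K) :
    (∑ k ∈ Finset.Icc 1 K,
        ((k : ℝ) - 1) * (1 - b) ^ ((k : ℤ) - 3) * ((k : ℝ) * b - 2) * P k)
      ≤ (K : ℝ) * ((K : ℝ) - 1) * (1 - b) ^ ((K : ℤ) - 3) * (b - 1) * P K ∧
    (K : ℝ) * ((K : ℝ) - 1) * (1 - b) ^ ((K : ℤ) - 3) * (b - 1) * P K ≤ 0 :=
  stp_second_derivative_bound_general K b hb P hmono hnonneg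
end

section
/- For K ≥ 1 and P(1) ≥ … ≥ P(K) ≥ 0 with P(1) > 0, the function g(b) = Σ_{k=1}^K (1-b)^{k-2}(1-kb) P(k) is non-increasing on [0,1], g(0) = Σ_{k=1}^K P(k), and g(1) = P(1) - P(2) (for K ≥ 2). -/
/-!
Summation by parts rewrites `g b` as
`K (1-b)^(K-1) P(K) + ∑_{k=2}^K (k-1) (1-b)^(k-2) (P(k-1) - P(k))`.
Every coefficient is nonnegative because `P` is nonnegative and non-increasing, and every
power of `1 - b` is non-increasing on `[0, 1]`; at `b = 1` only the `k = 2` term survives.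
-/

open Finset

theorem sum_Icc_stp_eq_abel {R : Type*} [CommRing R] (b : R) (P : ℕ → R) {K : ℕ} (hK : 1 ≤ K) :
    ∑ k ∈ Icc 1 K, ((1 - b) ^ (k - 1) - b * ((k : R) - 1) * (1 - b) ^ (k - 2)) * P k
      = K * (1 - b) ^ (K - 1) * P K
        + ∑ k ∈ Icc 2 K, ((k : R) - 1) * (1 - b) ^ (k - 2) * (P (k - 1) - P k) := by
  induction K, hK using Nat.le_induction with
  | base => simp
  | succ n hn ih =>
    obtain ⟨m, rfl⟩ : ∃ m, n = m + 1 := ⟨n - 1, by omega⟩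
    rw [sum_Icc_succ_top (show 1 ≤ m + 1 + 1 by omega), ih,
      sum_Icc_succ_top (show 2 ≤ m + 1 + 1 by omega)]
    simp only [Nat.add_sub_cancel, show m + 1 + 1 - 2 = m by omega, pow_succ]
    push_cast
    ring

theorem stp_derivative_monotone_general (K : ℕ) (hK : 1 ≤ K) (P : ℕ → ℝ)
    (hmono : ∀ k, 1 ≤ k → k < K → P (k + 1) ≤ P k)
    (hnonneg : ∀ k, 1 ≤ k → k ≤ K → 0 ≤ P k)
    (g : ℝ → ℝ)
    (hg : ∀ b : ℝ, g b = ∑ k ∈ Finset.Icc 1 K,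
        ((1 - b) ^ (k - 1) - b * ((k : ℝ) - 1) * (1 - b) ^ (k - 2)) * P k) :
    AntitoneOn g (Set.Icc (0:ℝ) 1) ∧
      g 0 = ∑ k ∈ Finset.Icc 1 K, P k ∧
      (2 ≤ K → g 1 = P 1 - P 2) := by
  have habel (b : ℝ) := (hg b).trans (sum_Icc_stp_eq_abel b P hK)
  refine ⟨fun x _ y hy hxy => ?_, by simp [hg], fun h2K => ?_⟩
  · rw [habel, habel]
    have hgap : ∀ k ∈ Icc 2 K, 0 ≤ P (k - 1) - P k := fun k hk => by
      have := hmono (k - 1) (by grind) (by grind)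
      rw [Nat.sub_add_cancel (by grind)] at this
      linarith
    have hPK : 0 ≤ P K := hnonneg K hK le_rfl
    have hy1 : y ≤ 1 := hy.2
    gcongr with k hk
    · exact hgap k hk
    · exact sub_nonneg.2 (Nat.one_le_cast.2 (by grind))
  · rw [habel, sum_eq_single_of_mem 2 (by simp [h2K])]
    · norm_num [zero_pow (show K - 1 ≠ 0 by omega)]
    · intro k hk hk2
      simp [zero_pow (show k - 2 ≠ 0 by grind)]

/-- The function `g(b) = ∑_{k=1}^K (1-b)^{k-2}(1-kb) P(k)` (written via the product rule
as `(1-b)^{k-1} - b(k-1)(1-b)^{k-2}`, to which it is equal wherever defined) is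
non-increasing on `[0,1]`, with `g(0) = ∑_{k=1}^K P(k)` and `g(1) = P(1) - P(2)` for `K ≥ 2`. -/
theorem stp_derivative_monotone (K : ℕ) (hK : 1 ≤ K) (P : ℕ → ℝ)
    (hmono : ∀ k, 1 ≤ k → k < K → P (k + 1) ≤ P k)
    (hnonneg : ∀ k, 1 ≤ k → k ≤ K → 0 ≤ P k) (hP1 : 0 < P 1)
    (g : ℝ → ℝ)
    (hg : ∀ b : ℝ, g b = ∑ k ∈ Finset.Icc 1 K,
        ((1 - b) ^ (k - 1) - b * ((k : ℝ) - 1) * (1 - b) ^ (k - 2)) * P k) :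
    AntitoneOn g (Set.Icc (0:ℝ) 1) ∧
      g 0 = ∑ k ∈ Finset.Icc 1 K, P k ∧
      (2 ≤ K → g 1 = P 1 - P 2) :=
  stp_derivative_monotone_general K hK P hmono hnonneg g hg
end

section
/- For γ > 0 and 1 ≤ k ≤ K, arccot(K/(kγ)) = arctan(kγ/K), and the closed-form ZF coverage approximation P(k) = (1 + √(kγ/K) · arccot(K/(kγ)))^{-k} is non-increasing in k for fixed K and γ > 0. -/
open Real Set

lemma pi_div_two_sub_arctan_div {a b : ℝ} (ha : 0 < a) (hb : 0 < b) :
    π / 2 - arctan (a / b) = arctan (b / a) := by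
  rw [← arctan_inv_of_pos (div_pos ha hb), inv_div]

/-- The base `1 + √x · arccot (1/x)` of the closed form, with `x = kγ/K`. -/
noncomputable def zfBase (x : ℝ) : ℝ := 1 + √x * (π / 2 - arctan x⁻¹)

lemma pi_div_two_sub_arctan_pos (x : ℝ) : 0 < π / 2 - arctan x :=
  sub_pos.mpr (arctan_lt_pi_div_two x)

lemma one_le_zfBase (x : ℝ) : 1 ≤ zfBase x :=
  le_add_of_nonneg_right (mul_nonneg (sqrt_nonneg x) (pi_div_two_sub_arctan_pos _).le)

lemma zfBase_monotoneOn : MonotoneOn zfBase (Ioi 0) := by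
  intro x hx y _ hxy
  have hsqrt : √x ≤ √y := sqrt_le_sqrt hxy
  have harccot : π / 2 - arctan x⁻¹ ≤ π / 2 - arctan y⁻¹ :=
    sub_le_sub_left (arctan_strictMono.monotone (inv_anti₀ hx hxy)) _
  exact add_le_add_right
    (mul_le_mul hsqrt harccot (pi_div_two_sub_arctan_pos _).le (sqrt_nonneg y)) 1

lemma inv_pow_succ_le_inv_pow {a b : ℝ} (ha : 1 ≤ a) (hab : a ≤ b) (k : ℕ) :
    (b ^ (k + 1))⁻¹ ≤ (a ^ k)⁻¹ := by
  have hb : 1 ≤ b := ha.trans hab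
  refine inv_anti₀ (pow_pos (by linarith) k) ?_
  calc a ^ k ≤ b ^ k := pow_le_pow_left₀ (by linarith) hab k
    _ ≤ b ^ (k + 1) := pow_le_pow_right₀ hb k.le_succ

theorem zf_closed_form_monotone_general (K : ℕ) (γ : ℝ) (hγ : 0 < γ)
    (P : ℕ → ℝ)
    (hP : ∀ k : ℕ, P k =
      ((1 + Real.sqrt ((k : ℝ) * γ / K) *
          (Real.pi / 2 - Real.arctan ((K : ℝ) / ((k : ℝ) * γ)))) ^ k)⁻¹) :
    (∀ k : ℕ, 1 ≤ k → k ≤ K →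
        Real.pi / 2 - Real.arctan ((K : ℝ) / ((k : ℝ) * γ))
          = Real.arctan ((k : ℝ) * γ / (K : ℝ))) ∧
      (∀ k, 1 ≤ k → k < K → P (k + 1) ≤ P k) := by
  have hP' : ∀ k : ℕ, P k = (zfBase (k * γ / K) ^ k)⁻¹ := fun k => by
    rw [hP, zfBase, inv_div]
  refine ⟨fun k hk hkK => pi_div_two_sub_arctan_div (by norm_cast; omega) (by positivity),
    fun k hk hkK => ?_⟩
  have hK : (0 : ℝ) < K := by norm_cast; omega
  have hk : (0 : ℝ) < k := by exact_mod_cast hk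
  rw [hP', hP']
  refine inv_pow_succ_le_inv_pow (one_le_zfBase _)
    (zfBase_monotoneOn (mem_Ioi.mpr (by positivity)) (mem_Ioi.mpr (by positivity)) ?_) k
  gcongr
  linarith

/-- For `γ > 0` and `1 ≤ k ≤ K`, `arccot(K/(kγ)) = arctan(kγ/K)` (with
`arccot x = π/2 - arctan x`), and the closed-form ZF coverage approximation
`P(k) = (1 + √(kγ/K) arccot(K/(kγ)))^{-k}` is non-increasing in `k`. -/
theorem zf_closed_form_monotone (K : ℕ) (hK : 1 ≤ K) (γ : ℝ) (hγ : 0 < γ)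
    (P : ℕ → ℝ)
    (hP : ∀ k : ℕ, P k =
      ((1 + Real.sqrt ((k : ℝ) * γ / K) *
          (Real.pi / 2 - Real.arctan ((K : ℝ) / ((k : ℝ) * γ)))) ^ k)⁻¹) :
    (∀ k : ℕ, 1 ≤ k → k ≤ K →
        Real.pi / 2 - Real.arctan ((K : ℝ) / ((k : ℝ) * γ))
          = Real.arctan ((k : ℝ) * γ / (K : ℝ))) ∧
      (∀ k, 1 ≤ k → k < K → P (k + 1) ≤ P k) :=
  zf_closed_form_monotone_general K γ hγ P hP
end
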